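/- arXiv:1711.10841 — 3 statements merged into one kernel-verified Lean document; each statement's English description precedes it below -/
import Mathlib

section
/- Let f : M → N and g : N → P be smooth maps between smooth manifolds, and let S ⊆ P be a C¹-submanifold. If g is transverse to S and f is transverse to g⁻¹(S), then g ∘ f is transverse to S. -/
open Set

/-- The tangent space of a set `S` at a point `x`: the linear span of the tangent cone.
For a `C¹` submanifold this is the usual tangent space. -/
noncomputable def tangentAt {E : Type*} [NormedAddCommGroup E] [NormedSpace ℝ E]
    (S : Set E) (x : E) : Submodule ℝ E :=
  Submodule.span ℝ (tangentConeAt ℝ S x)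

/-- `S` is a `C¹` submanifold of codimension `c`: near every point it is the zero set of a
`C¹` map into `ℝᶜ` whose derivative is surjective along `S`. -/
def IsC1Submanifold {E : Type*} [NormedAddCommGroup E] [NormedSpace ℝ E]
    (c : ℕ) (S : Set E) : Prop :=
  ∀ x ∈ S, ∃ (U : Set E) (F : E → EuclideanSpace ℝ (Fin c)),
    IsOpen U ∧ x ∈ U ∧ ContDiffOn ℝ 1 F U ∧
    (∀ y ∈ U ∩ S, Function.Surjective (fderiv ℝ F y)) ∧
    S ∩ U = {y ∈ U | F y = 0}

/-- `f` is transverse to `S`: at every point mapping into `S`, the image of the derivative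
together with the tangent space of `S` spans the ambient space. -/
def Transverse {E F : Type*} [NormedAddCommGroup E] [NormedSpace ℝ E]
    [NormedAddCommGroup F] [NormedSpace ℝ F] (f : E → F) (S : Set F) : Prop :=
  ∀ x, f x ∈ S → LinearMap.range (fderiv ℝ f x : E →ₗ[ℝ] F) ⊔ tangentAt S (f x) = ⊤

/-- if `g` is transverse to the `C¹` submanifold `S` and `f` is transverse
to `g⁻¹(S)`, then `g ∘ f` is transverse to `S`. -/
theorem stmt_0 {m n p c : ℕ}
    (f : EuclideanSpace ℝ (Fin m) → EuclideanSpace ℝ (Fin n))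
    (g : EuclideanSpace ℝ (Fin n) → EuclideanSpace ℝ (Fin p))
    (hf : ContDiff ℝ (⊤ : ℕ∞) f) (hg : ContDiff ℝ (⊤ : ℕ∞) g)
    (S : Set (EuclideanSpace ℝ (Fin p))) (hS : IsC1Submanifold c S)
    (hgS : Transverse g S) (hfS : Transverse f (g ⁻¹' S)) :
    Transverse (g ∘ f) S := by
  intro x hx
  set Df := fderiv ℝ f x
  set Dg := fderiv ℝ g (f x)
  have hdf : DifferentiableAt ℝ f x := hf.differentiable (by simp) x
  have hdg : DifferentiableAt ℝ g (f x) := hg.differentiable (by simp) (f x)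
  have hchain : fderiv ℝ (g ∘ f) x = Dg.comp Df := fderiv_comp x hdg hdf
  -- Dg maps the tangent cone of g⁻¹S at f x into the tangent cone of S at g (f x)
  have hmaps : Set.MapsTo Dg (tangentConeAt ℝ (g ⁻¹' S) (f x))
      (tangentConeAt ℝ S (g (f x))) := by
    have h1 := (hdg.hasFDerivAt.hasFDerivWithinAt (s := g ⁻¹' S)).mapsTo_tangent_cone
    exact h1.mono_right (tangentConeAt_mono (Set.image_preimage_subset g S))
  have hmap_le : (tangentAt (g ⁻¹' S) (f x)).map (Dg : _ →ₗ[ℝ] _)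
      ≤ tangentAt S (g (f x)) := by
    rw [tangentAt, Submodule.map_span, Submodule.span_le]
    exact hmaps.image_subset.trans Submodule.subset_span
  have key : LinearMap.range (Dg : EuclideanSpace ℝ (Fin n) →ₗ[ℝ] EuclideanSpace ℝ (Fin p)) ≤
      LinearMap.range (Dg.comp Df : EuclideanSpace ℝ (Fin m) →ₗ[ℝ] EuclideanSpace ℝ (Fin p)) ⊔ tangentAt S (g (f x)) := by
    have h2 : LinearMap.range (Df : EuclideanSpace ℝ (Fin m) →ₗ[ℝ] EuclideanSpace ℝ (Fin n)) ⊔ tangentAt (g ⁻¹' S) (f x) = ⊤ := hfS x hx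
    have : LinearMap.range (Dg : EuclideanSpace ℝ (Fin n) →ₗ[ℝ] EuclideanSpace ℝ (Fin p)) = Submodule.map (Dg : _ →ₗ[ℝ] _)
        (LinearMap.range (Df : EuclideanSpace ℝ (Fin m) →ₗ[ℝ] EuclideanSpace ℝ (Fin n)) ⊔ tangentAt (g ⁻¹' S) (f x)) := by
      rw [h2, Submodule.map_top]
    rw [this, Submodule.map_sup]
    apply sup_le
    · have : LinearMap.range (Dg.comp Df : EuclideanSpace ℝ (Fin m) →ₗ[ℝ] EuclideanSpace ℝ (Fin p)) = Submodule.map (Dg : _ →ₗ[ℝ] _) (LinearMap.range (Df : EuclideanSpace ℝ (Fin m) →ₗ[ℝ] EuclideanSpace ℝ (Fin n))) := by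
        ext y
        simp only [LinearMap.mem_range, Submodule.mem_map,
          ContinuousLinearMap.coe_comp', Function.comp_apply]
        constructor
        · rintro ⟨v, rfl⟩; exact ⟨Df v, ⟨v, rfl⟩, rfl⟩
        · rintro ⟨w, ⟨v, rfl⟩, rfl⟩; exact ⟨v, rfl⟩
      rw [this]
      exact le_sup_left
    · exact hmap_le.trans le_sup_right
  have hg2 : LinearMap.range (Dg : EuclideanSpace ℝ (Fin n) →ₗ[ℝ] EuclideanSpace ℝ (Fin p)) ⊔ tangentAt S (g (f x)) = ⊤ := hgS (f x) hx
  have : (⊤ : Submodule ℝ (EuclideanSpace ℝ (Fin p))) ≤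
      LinearMap.range (Dg.comp Df : EuclideanSpace ℝ (Fin m) →ₗ[ℝ] EuclideanSpace ℝ (Fin p)) ⊔ tangentAt S (g (f x)) := by
    rw [← hg2]
    exact sup_le key le_sup_right
  rw [Function.comp_apply, hchain] at *
  exact top_le_iff.mp this
end

section
/- Let T and Y be subspaces of ℝⁿ with Y ⊄ T and dim Y = r. Then there exists a subspace H of ℝⁿ with dim H = n − r such that H + Y = ℝⁿ and H + T ≠ ℝⁿ. -/
/-!
Choose a hyperplane `W` containing `T` but not `Y`; then `W + Y` is the whole space. A complement
`H` of `Y ∩ W` inside `W` works: `H + Y ⊇ (Y ∩ W) + H + Y = W + Y`, while `H + T ⊆ W`, and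
`dim H = dim W - dim (Y ∩ W) = n - dim Y` by the dimension formula for `W + Y`.
-/

open Module

namespace Submodule

variable {K V : Type*} [DivisionRing K] [AddCommGroup V] [Module K V]

theorem exists_isCoatom_ge_not_le {T Y : Submodule K V} (hYT : ¬ Y ≤ T) :
    ∃ W : Submodule K V, IsCoatom W ∧ T ≤ W ∧ ¬ Y ≤ W := by
  obtain ⟨y, hyY, hyT⟩ := SetLike.not_le_iff_exists.mp hYT
  obtain ⟨f, hfy, hTf⟩ := exists_le_ker_of_notMem hyT
  have hf : Function.Surjective f := LinearMap.surjective (ne_of_apply_ne (· y) hfy)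
  exact ⟨LinearMap.ker f, LinearMap.isCoatom_ker_of_surjective hf, hTf, fun hYf ↦ hfy (hYf hyY)⟩

theorem exists_finrank_add_eq_sup_eq_top_sup_ne_top [FiniteDimensional K V]
    {T Y : Submodule K V} (hYT : ¬ Y ≤ T) :
    ∃ H : Submodule K V,
      finrank K H + finrank K Y = finrank K V ∧ H ⊔ Y = ⊤ ∧ H ⊔ T ≠ ⊤ := by
  obtain ⟨W, hW, hTW, hYW⟩ := exists_isCoatom_ge_not_le hYT
  have hWY : W ⊔ Y = ⊤ := codisjoint_iff.mp (hW.not_le_iff_codisjoint.mp hYW)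
  obtain ⟨H, hdisj, hsup⟩ := IsModularLattice.exists_disjoint_and_sup_eq (inf_le_right : Y ⊓ W ≤ W)
  have hHW : H ≤ W := hsup ▸ le_sup_right
  refine ⟨H, ?_, ?_, ?_⟩
  · have hW_dim := finrank_sup_add_finrank_inf_eq (Y ⊓ W) H
    have hWY_dim := finrank_sup_add_finrank_inf_eq Y W
    rw [hsup, hdisj.eq_bot, finrank_bot] at hW_dim
    rw [sup_comm, hWY, finrank_top] at hWY_dim
    omega
  · refine eq_top_iff.mpr (hWY ▸ sup_le ?_ le_sup_right)
    rw [← hsup]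
    exact sup_le (inf_le_left.trans le_sup_right) le_sup_left
  · exact fun hHT ↦ hW.ne_top (top_le_iff.mp (hHT ▸ sup_le hHW hTW))

end Submodule

/-- Trotman's linear-algebra lemma: if `Y ⊄ T` and `dim Y = r`, there is a
subspace `H` of dimension `n - r` with `H + Y = ℝⁿ` and `H + T ≠ ℝⁿ`. -/
theorem stmt_4 {n r : ℕ} (T Y : Submodule ℝ (EuclideanSpace ℝ (Fin n)))
    (hYT : ¬ Y ≤ T) (hr : Module.finrank ℝ Y = r) :
    ∃ H : Submodule ℝ (EuclideanSpace ℝ (Fin n)),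
      Module.finrank ℝ H = n - r ∧ H ⊔ Y = ⊤ ∧ H ⊔ T ≠ ⊤ := by
  obtain ⟨H, hdim, hHY, hHT⟩ := Submodule.exists_finrank_add_eq_sup_eq_top_sup_ne_top hYT
  rw [finrank_euclideanSpace_fin, hr] at hdim
  exact ⟨H, by omega, hHY, hHT⟩
end

section
/- Let X, Y be disjoint C¹-submanifolds of ℝⁿ with Y ⊆ closure(X), and suppose the pair (X, Y) is Whitney (a)-regular at y ∈ Y. Let f_i : M → ℝⁿ be C¹ maps converging to f in the C¹ topology (locally uniformly with derivatives), with f transverse to both X and Y. Then for all sufficiently large i (and in a neighborhood of any compact set), f_i is transverse to Y at points mapping near y. -/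
open Filter Topology Set

variable {n : ℕ}

/-- Orthogonal projection onto a subspace, as a continuous endomorphism; used to express
Grassmannian convergence of subspaces. -/
noncomputable def projCLM (K : Submodule ℝ (EuclideanSpace ℝ (Fin n))) :
    EuclideanSpace ℝ (Fin n) →L[ℝ] EuclideanSpace ℝ (Fin n) :=
  K.subtypeL.comp K.orthogonalProjection

/-- Whitney `(a)`-regularity of `X` over `Y` at `y`: for any sequence `x i ∈ X` tending to
`y` whose tangent spaces converge (in the Grassmannian) to a subspace `τ`, one has
`T_y Y ⊆ τ`. -/
def WhitneyARegularAt (X Y : Set (EuclideanSpace ℝ (Fin n)))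
    (y : EuclideanSpace ℝ (Fin n)) : Prop :=
  ∀ (x : ℕ → EuclideanSpace ℝ (Fin n)), (∀ i, x i ∈ X) → Tendsto x atTop (𝓝 y) →
    ∀ τ : Submodule ℝ (EuclideanSpace ℝ (Fin n)),
      Tendsto (fun i => projCLM (tangentAt X (x i))) atTop (𝓝 (projCLM τ)) →
      tangentAt Y y ≤ τ

/-!
Near `y`, `Y` is the zero set of a `C¹` submersion `F`, so `T_z Y = ker DF(z)` and a linear map
`A` is transverse to `Y` at `z` exactly when `DF(z) ∘ A` is surjective. This is an open condition
on the pair `(z, A)`, and it holds at `(y, Df(x))` whenever `f x = y`. Since `(fs i, D(fs i))`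
converges to `(f, Df)` uniformly on the compact set `K`, a compactness argument propagates it to
`(fs i x, D(fs i)(x))` for all large `i` and all `x ∈ K` with `fs i x` close to `y`.
-/

theorem LinearMap.range_sup_ker_eq_top_iff_surjective_comp {R M N P : Type*} [Ring R]
    [AddCommGroup M] [Module R M] [AddCommGroup N] [Module R N] [AddCommGroup P] [Module R P]
    (L : M →ₗ[R] N) {T : N →ₗ[R] P} (hT : Function.Surjective T) :
    range L ⊔ ker T = ⊤ ↔ Function.Surjective (T ∘ₗ L) := by
  rw [← Submodule.comap_map_eq, ← range_eq_top, range_comp,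
    ← (Submodule.comap_injective_of_surjective hT).eq_iff, Submodule.comap_top]

theorem LinearMap.surjective_iff_finrank_le_rank {K V W : Type*} [Field K] [AddCommGroup V]
    [Module K V] [AddCommGroup W] [Module K W] [FiniteDimensional K W] (f : V →ₗ[K] W) :
    Function.Surjective f ↔ ↑(Module.finrank K W) ≤ f.rank := by
  rw [← range_eq_top, rank, ← Module.finrank_eq_rank, Nat.cast_le]
  exact ⟨fun h => h ▸ (finrank_top K W).ge,
    fun h => Submodule.eq_top_of_finrank_eq (h.antisymm' (Submodule.finrank_le _))⟩

theorem ContinuousLinearMap.isOpen_setOf_surjective {𝕜 E F : Type*} [NontriviallyNormedField 𝕜]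
    [CompleteSpace 𝕜] [NormedAddCommGroup E] [NormedSpace 𝕜 E] [NormedAddCommGroup F]
    [NormedSpace 𝕜 F] [FiniteDimensional 𝕜 F] :
    IsOpen {f : E →L[𝕜] F | Function.Surjective f} := by
  convert isOpen_setOfPred_nat_le_rank (𝕜 := 𝕜) (E := E) (F := F) (Module.finrank 𝕜 F) using 1
  ext f
  exact (f : E →ₗ[𝕜] F).surjective_iff_finrank_le_rank

theorem HasStrictFDerivAt.tangentConeAt_preimage_singleton {𝕜 E F : Type*}
    [NontriviallyNormedField 𝕜] [CompleteSpace 𝕜] [NormedAddCommGroup E] [NormedSpace 𝕜 E]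
    [CompleteSpace E] [NormedAddCommGroup F] [NormedSpace 𝕜 F] [FiniteDimensional 𝕜 F]
    {g : E → F} {g' : E →L[𝕜] F} {z : E} (hg : HasStrictFDerivAt g g' z) (hg' : g'.range = ⊤) :
    tangentConeAt 𝕜 (g ⁻¹' {g z}) z = g'.ker := by
  apply Subset.antisymm
  · intro v hv
    have hconst : HasFDerivWithinAt g (0 : E →L[𝕜] F) (g ⁻¹' {g z}) z :=
      (hasFDerivWithinAt_const (g z) z _).congr (fun w hw => hw) rfl
    exact hg.hasFDerivAt.hasFDerivWithinAt.unique_on hconst hv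
  · -- the implicit function parametrises the fiber by `ker g'`, with derivative the inclusion
    have hfiber : ∀ᶠ k in 𝓝 (0 : g'.ker), g (hg.implicitFunction g g' hg' (g z) k) = g z :=
      (tendsto_const_nhds.prodMk_nhds tendsto_id).eventually (hg.map_implicitFunction_eq hg')
    have hmaps := ((hg.to_implicitFunction hg').hasFDerivAt.hasFDerivWithinAt
      (s := {k | g (hg.implicitFunction g g' hg' (g z) k) = g z})).mapsTo_tangent_cone
    rw [tangentConeAt_of_mem_nhds hfiber, hg.implicitFunction_apply_image hg'] at hmaps
    intro v hv
    exact tangentConeAt_mono (image_subset_iff.2 fun k hk => hk) (hmaps (mem_univ ⟨v, hv⟩))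

section LevelSet

variable {E E' G : Type*} [NormedAddCommGroup E] [NormedSpace ℝ E]
  [NormedAddCommGroup E'] [NormedSpace ℝ E'] [NormedAddCommGroup G] [NormedSpace ℝ G]
  [FiniteDimensional ℝ G] {S U : Set E} {F : E → G} {z : E}

theorem tangentAt_eq_ker_fderiv [CompleteSpace E] (hU : IsOpen U) (hF : ContDiffOn ℝ 1 F U)
    (hSU : S ∩ U = {w ∈ U | F w = 0}) (hz : z ∈ U ∩ S)
    (hsurj : Function.Surjective (fderiv ℝ F z)) :
    tangentAt S z = LinearMap.ker (fderiv ℝ F z : E →ₗ[ℝ] G) := by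
  have hUz : U ∈ 𝓝 z := hU.mem_nhds hz.1
  have hFz : F z = 0 := (hSU.subset ⟨hz.2, hz.1⟩).2
  have hS : S =ᶠ[𝓝 z] F ⁻¹' {F z} := by
    rw [eventuallyEq_set]
    filter_upwards [hUz] with w hw
    have hmem : w ∈ S ↔ w ∈ S ∩ U := ⟨fun h => ⟨h, hw⟩, And.left⟩
    rw [hFz, hmem, hSU]
    simp [hw]
  have hstrict := (hF.contDiffAt hUz).hasStrictFDerivAt one_ne_zero
  rw [tangentAt, tangentConeAt_congr (nhdsWithin_eq_iff_eventuallyEq.2 hS),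
    hstrict.tangentConeAt_preimage_singleton (LinearMap.range_eq_top.2 hsurj), Submodule.span_eq]

theorem range_sup_tangentAt_eq_top_iff [CompleteSpace E] (hU : IsOpen U) (hF : ContDiffOn ℝ 1 F U)
    (hSU : S ∩ U = {w ∈ U | F w = 0}) (hz : z ∈ U ∩ S)
    (hsurj : Function.Surjective (fderiv ℝ F z)) (A : E' →L[ℝ] E) :
    LinearMap.range (A : E' →ₗ[ℝ] E) ⊔ tangentAt S z = ⊤ ↔
      Function.Surjective ((fderiv ℝ F z).comp A) := by
  rw [tangentAt_eq_ker_fderiv hU hF hSU hz hsurj,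
    LinearMap.range_sup_ker_eq_top_iff_surjective_comp _ hsurj]
  rfl

theorem isOpen_setOf_mem_and_surjective_fderiv_comp (hU : IsOpen U) (hF : ContDiffOn ℝ 1 F U) :
    IsOpen {q : E × (E' →L[ℝ] E) | q.1 ∈ U ∧ Function.Surjective ((fderiv ℝ F q.1).comp q.2)} := by
  have hcomp : ContinuousOn (fun q : E × (E' →L[ℝ] E) => (fderiv ℝ F q.1).comp q.2) (U ×ˢ univ) :=
    ((hF.continuousOn_fderiv_of_isOpen hU le_rfl).comp continuousOn_fst
      fun _ hq => hq.1).clm_comp continuousOn_snd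
  convert hcomp.isOpen_inter_preimage (hU.prod isOpen_univ)
    ContinuousLinearMap.isOpen_setOf_surjective using 1
  ext q
  simp

end LevelSet

theorem TendstoUniformlyOn.tendsto_prod_nhdsWithin {ι α β : Type*} [TopologicalSpace α]
    [UniformSpace β] {F : ι → α → β} {f : α → β} {l : Filter ι} {K : Set α} {x₀ : α}
    (h : TendstoUniformlyOn F f l K) (hf : ContinuousWithinAt f K x₀) :
    Tendsto (fun q : ι × α => F q.1 q.2) (l ×ˢ 𝓝[K] x₀) (𝓝 (f x₀)) :=
  TendstoUniformlyOn.tendsto_comp (fun u hu => tendsto_fst.eventually (h u hu)) hf tendsto_snd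

theorem IsCompact.exists_nhds_eventually_mem_of_tendstoUniformlyOn {ι α β γ : Type*}
    [TopologicalSpace α] [UniformSpace β] [T2Space β] [UniformSpace γ] {l : Filter ι} {K : Set α}
    (hK : IsCompact K) {gs : ι → α → β} {g : α → β} {Ls : ι → α → γ} {L : α → γ}
    (hg : ContinuousOn g K) (hL : ContinuousOn L K)
    (hgs : TendstoUniformlyOn gs g l K) (hLs : TendstoUniformlyOn Ls L l K)
    {W : Set (β × γ)} {b : β} (hW : ∀ x ∈ K, g x = b → W ∈ 𝓝 (b, L x)) :
    ∃ V ∈ 𝓝 b, ∀ᶠ i in l, ∀ x ∈ K, gs i x ∈ V → (gs i x, Ls i x) ∈ W := by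
  refine hK.induction_on (p := fun s => ∃ V ∈ 𝓝 b, ∀ᶠ i in l, ∀ x ∈ s, gs i x ∈ V →
    (gs i x, Ls i x) ∈ W) ⟨univ, univ_mem, by simp⟩ ?_ ?_ ?_
  · rintro s t hst ⟨V, hV, hev⟩
    exact ⟨V, hV, hev.mono fun i hi x hx => hi x (hst hx)⟩
  · rintro s t ⟨V, hV, hevV⟩ ⟨V', hV', hevV'⟩
    refine ⟨V ∩ V', inter_mem hV hV', (hevV.and hevV').mono ?_⟩
    rintro i ⟨hi, hi'⟩ x (hx | hx) hxV
    exacts [hi x hx hxV.1, hi' x hx hxV.2]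
  · intro x₀ hx₀
    have hglim := hgs.tendsto_prod_nhdsWithin (hg x₀ hx₀)
    have hlim := hglim.prodMk_nhds (hLs.tendsto_prod_nhdsWithin (hL x₀ hx₀))
    have hnear : ∃ V ∈ 𝓝 b, ∀ᶠ q in l ×ˢ 𝓝[K] x₀,
        gs q.1 q.2 ∈ V → (gs q.1 q.2, Ls q.1 q.2) ∈ W := by
      by_cases hb : g x₀ = b
      · subst hb
        exact ⟨univ, univ_mem, (hlim.eventually_mem (hW x₀ hx₀ rfl)).mono fun q hq _ => hq⟩
      · obtain ⟨V, hV, O, hO, hVO⟩ := Filter.disjoint_iff.1 (disjoint_nhds_nhds.2 (Ne.symm hb))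
        refine ⟨V, hV, (hglim.eventually_mem hO).mono fun q hq hqV => ?_⟩
        exact absurd hq (hVO.subset_compl_right hqV)
    obtain ⟨V, hV, hev⟩ := hnear
    obtain ⟨P, hP, Q, hQ, hPQ⟩ := eventually_prod_iff.1 hev
    exact ⟨{x | Q x}, hQ, V, hV, hP.mono fun i hi x hx => hPQ hi hx⟩

theorem stmt_13_general {m cY : ℕ}
    (Y : Set (EuclideanSpace ℝ (Fin n)))
    (hY : IsC1Submanifold cY Y)
    (y : EuclideanSpace ℝ (Fin n)) (hy : y ∈ Y)
    (f : EuclideanSpace ℝ (Fin m) → EuclideanSpace ℝ (Fin n))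
    (fs : ℕ → EuclideanSpace ℝ (Fin m) → EuclideanSpace ℝ (Fin n))
    (hf : ContDiff ℝ 1 f)
    -- `fs i → f` and `D(fs i) → Df` uniformly on compact sets
    (hconv : ∀ K : Set (EuclideanSpace ℝ (Fin m)), IsCompact K →
      TendstoUniformlyOn (fun i x => fs i x) f atTop K ∧
      TendstoUniformlyOn (fun i x => fderiv ℝ (fs i) x) (fun x => fderiv ℝ f x) atTop K)
    (hfY : ∀ x, f x ∈ Y →
      LinearMap.range (fderiv ℝ f x : EuclideanSpace ℝ (Fin m) →ₗ[ℝ] EuclideanSpace ℝ (Fin n)) ⊔ tangentAt Y (f x) = ⊤) :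
    ∀ K : Set (EuclideanSpace ℝ (Fin m)), IsCompact K →
      ∃ V ∈ 𝓝 y, ∀ᶠ i in atTop, ∀ x ∈ K, fs i x ∈ Y ∩ V →
        LinearMap.range (fderiv ℝ (fs i) x : EuclideanSpace ℝ (Fin m) →ₗ[ℝ] EuclideanSpace ℝ (Fin n)) ⊔ tangentAt Y (fs i x) = ⊤ := by
  intro K hK
  obtain ⟨U, F, hU, hyU, hF, hsurj, hYU⟩ := hY y hy
  have htransverse (z) (hz : z ∈ U ∩ Y) :=
    range_sup_tangentAt_eq_top_iff (E' := EuclideanSpace ℝ (Fin m)) hU hF hYU hz (hsurj z hz)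
  obtain ⟨V, hV, hev⟩ := hK.exists_nhds_eventually_mem_of_tendstoUniformlyOn
    hf.continuous.continuousOn (hf.continuous_fderiv one_ne_zero).continuousOn
    (hconv K hK).1 (hconv K hK).2 (b := y) fun x _ hxy =>
      (isOpen_setOf_mem_and_surjective_fderiv_comp hU hF).mem_nhds
        ⟨hyU, (htransverse y ⟨hyU, hy⟩ _).1 (hxy ▸ hfY x (hxy ▸ hy))⟩
  refine ⟨V, hV, hev.mono fun i hi x hx hxYV => ?_⟩
  obtain ⟨hxU, hcomp⟩ := hi x hx hxYV.2
  exact (htransverse _ ⟨hxU, hxYV.1⟩ _).2 hcomp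

/-- stability of transversality under `(a)`-regularity, local `C¹` form:
if `(X, Y)` is Whitney `(a)`-regular at `y ∈ Y ⊆ closure X`, and `C¹` maps `f i` converge
to `f` locally uniformly together with their derivatives, with `f` transverse to `X` and
to `Y`, then on any compact set, for `i` large, `f i` is transverse to `Y` at all points
mapping near `y`. -/
theorem stmt_13 {m cX cY : ℕ}
    (X Y : Set (EuclideanSpace ℝ (Fin n)))
    (hX : IsC1Submanifold cX X) (hY : IsC1Submanifold cY Y)
    (hdisj : Disjoint X Y) (hadj : Y ⊆ closure X)
    (y : EuclideanSpace ℝ (Fin n)) (hy : y ∈ Y)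
    (ha : WhitneyARegularAt X Y y)
    (f : EuclideanSpace ℝ (Fin m) → EuclideanSpace ℝ (Fin n))
    (fs : ℕ → EuclideanSpace ℝ (Fin m) → EuclideanSpace ℝ (Fin n))
    (hf : ContDiff ℝ 1 f) (hfs : ∀ i, ContDiff ℝ 1 (fs i))
    -- `fs i → f` and `D(fs i) → Df` uniformly on compact sets
    (hconv : ∀ K : Set (EuclideanSpace ℝ (Fin m)), IsCompact K →
      TendstoUniformlyOn (fun i x => fs i x) f atTop K ∧
      TendstoUniformlyOn (fun i x => fderiv ℝ (fs i) x) (fun x => fderiv ℝ f x) atTop K)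
    (hfX : ∀ x, f x ∈ X →
      LinearMap.range (fderiv ℝ f x : EuclideanSpace ℝ (Fin m) →ₗ[ℝ] EuclideanSpace ℝ (Fin n)) ⊔ tangentAt X (f x) = ⊤)
    (hfY : ∀ x, f x ∈ Y →
      LinearMap.range (fderiv ℝ f x : EuclideanSpace ℝ (Fin m) →ₗ[ℝ] EuclideanSpace ℝ (Fin n)) ⊔ tangentAt Y (f x) = ⊤) :
    ∀ K : Set (EuclideanSpace ℝ (Fin m)), IsCompact K →
      ∃ V ∈ 𝓝 y, ∀ᶠ i in atTop, ∀ x ∈ K, fs i x ∈ Y ∩ V →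
        LinearMap.range (fderiv ℝ (fs i) x : EuclideanSpace ℝ (Fin m) →ₗ[ℝ] EuclideanSpace ℝ (Fin n)) ⊔ tangentAt Y (fs i x) = ⊤ :=
  stmt_13_general Y hY y hy f fs hf hconv hfY
end
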